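/- Let Γ be a simplicial graph with groups {G_v}, G = ΓG, and v a vertex. Set A = VΓ∖{v}. Then the canonical retraction ρ_A : G → G_A gives a split short exact sequence 1 → K → G → G_A → 1, where the kernel K = ker(ρ_A) is isomorphic to the free product of the conjugates gG_v g⁻¹ as g ranges over a transversal of G_{link(v)} in G_A. In particular G ≅ K ⋊ G_A. -/

import Mathlib

/-!
Write `A = VΓ ∖ {v}` and `C = link v`, and let `N` be the free product of copies of `G_v`
indexed by the cosets `G_A / G_C`, on which `G_A` acts by permuting the factors as it permutes
the cosets. Sending `G_v` to the factor at the trivial coset and `G_u` (`u ≠ v`) into `G_A`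
respects the edge relations, because `G_C` fixes the trivial coset; this gives
`G → N ⋊ G_A`. Conversely the factor at `g G_C` goes to `g G_v g⁻¹`, which does not depend on
the representative since `G_C` centralizes `G_v`. The two maps are mutually inverse, and they
carry `ρ_A` to the projection `N ⋊ G_A → G_A`, whose kernel is `N`. The decomposition
`G ≅ ker ρ_A ⋊ G_A` is that of any split extension.
-/

open scoped commutatorElement

/-- The commutation relators defining a graph product: commutators of elements of
vertex groups joined by an edge of `Γ`. -/
def GraphProductRels {V : Type*} (Γ : SimpleGraph V) (G : V → Type*)
    [∀ v, Group (G v)] : Set (Monoid.CoprodI G) :=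
  {x | ∃ (u v : V) (a : G u) (b : G v), Γ.Adj u v ∧
    x = ⁅Monoid.CoprodI.of a, Monoid.CoprodI.of b⁆}

/-- The graph product of the groups `G v` over the simplicial graph `Γ`: the quotient
of the free product by the normal closure of the edge commutation relators. -/
abbrev GraphProduct {V : Type*} (Γ : SimpleGraph V) (G : V → Type*)
    [∀ v, Group (G v)] : Type _ :=
  Monoid.CoprodI G ⧸ Subgroup.normalClosure (GraphProductRels Γ G)

/-- The canonical map from a vertex group to the graph product. -/
def GraphProduct.of {V : Type*} {Γ : SimpleGraph V} {G : V → Type*}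
    [∀ v, Group (G v)] {v : V} : G v →* GraphProduct Γ G :=
  (QuotientGroup.mk' _).comp Monoid.CoprodI.of

/-- The special subgroup of a graph product corresponding to a subset `A` of vertices. -/
def GraphProduct.special {V : Type*} (Γ : SimpleGraph V) (G : V → Type*)
    [∀ v, Group (G v)] (A : Set V) : Subgroup (GraphProduct Γ G) :=
  Subgroup.closure (⋃ v ∈ A, Set.range (GraphProduct.of (Γ := Γ) (v := v)))

namespace Monoid.CoprodI

variable {ι κ : Type*}

def congr {M N : ι → Type*} [∀ i, Monoid (M i)] [∀ i, Monoid (N i)]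
    (e : ∀ i, M i ≃* N i) : CoprodI M ≃* CoprodI N :=
  MonoidHom.toMulEquiv
    (lift fun i => of.comp (e i).toMonoidHom)
    (lift fun i => of.comp (e i).symm.toMonoidHom)
    (ext_hom _ _ fun i => by ext; simp)
    (ext_hom _ _ fun i => by ext; simp)

variable (H : Type*) [Monoid H]

def reindexConst (e : ι ≃ κ) : CoprodI (fun _ : ι => H) ≃* CoprodI (fun _ : κ => H) :=
  MonoidHom.toMulEquiv
    (lift fun i => of (M := fun _ : κ => H) (i := e i))
    (lift fun k => of (M := fun _ : ι => H) (i := e.symm k))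
    (ext_hom _ _ fun i => by ext; simp)
    (ext_hom _ _ fun k => by ext; simp)

@[simp]
theorem reindexConst_of (e : ι ≃ κ) {i : ι} (x : H) :
    reindexConst H e (of (M := fun _ : ι => H) (i := i) x) =
      of (M := fun _ : κ => H) (i := e i) x :=
  lift_of _ _

def permAction : Equiv.Perm ι →* MulAut (CoprodI fun _ : ι => H) where
  toFun e := reindexConst H e
  map_one' := MulEquiv.toMonoidHom_injective <| ext_hom _ _ fun i => by ext; simp
  map_mul' e f := MulEquiv.toMonoidHom_injective <| ext_hom _ _ fun i => by ext; simp

@[simp]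
theorem permAction_of (e : Equiv.Perm ι) {i : ι} (x : H) :
    permAction H e (of (M := fun _ : ι => H) (i := i) x) =
      of (M := fun _ : ι => H) (i := e i) x :=
  reindexConst_of H e x

end Monoid.CoprodI

namespace SemidirectProduct

variable {N H E : Type*} [Group N] [Group H] [Group E] {φ : H →* MulAut N}

theorem commute_inl_inr_of_fixed {n : N} {h : H} (hn : φ h n = n) :
    Commute (inl n : N ⋊[φ] H) (inr h) :=
  (mul_inv_eq_iff_eq_mul.mp (by rw [← map_inv, ← inl_aut, hn])).symm

noncomputable def kerEquivOfRightHomComp (e : E ≃* N ⋊[φ] H) (f : E →* H)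
    (hf : rightHom.comp e.toMonoidHom = f) : f.ker ≃* N :=
  (e.subgroupMap f.ker).trans <|
    (MulEquiv.subgroupCongr (by
      subst hf
      ext x
      rw [range_inl_eq_ker_rightHom]
      simp)).trans
    (MonoidHom.ofInjective inl_injective).symm

end SemidirectProduct

noncomputable def MonoidHom.kerExtension {E H : Type*} [Group E] [Group H] (f : E →* H)
    (hf : Function.Surjective f) : GroupExtension f.ker E H where
  inl := f.ker.subtype
  rightHom := f
  inl_injective := Subtype.val_injective
  range_inl_eq_ker_rightHom := Subgroup.range_subtype _
  rightHom_surjective := hf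

theorem Subgroup.bijective_mk_of_existsUnique_inv_mul_mem {M : Type*} [Group M]
    {H C : Subgroup M} {T : Set M} (hTH : T ⊆ H)
    (hT : ∀ g ∈ H, ∃! t, t ∈ T ∧ t⁻¹ * g ∈ C) :
    Function.Bijective fun t : T => (QuotientGroup.mk ⟨t, hTH t.2⟩ : H ⧸ C.subgroupOf H) := by
  constructor
  · intro a b hab
    have hab' : (a : M)⁻¹ * b ∈ C := by
      simpa only [QuotientGroup.eq, Subgroup.mem_subgroupOf, Subgroup.coe_mul,
        InvMemClass.coe_inv] using hab
    exact Subtype.ext ((hT b (hTH b.2)).unique ⟨a.2, hab'⟩ ⟨b.2, by simp⟩)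
  · intro q
    induction q using QuotientGroup.induction_on with | H g => ?_
    obtain ⟨t, ⟨ht, htg⟩, -⟩ := hT g g.2
    exact ⟨⟨t, ht⟩, QuotientGroup.eq.2 (by simpa [Subgroup.mem_subgroupOf] using htg)⟩

namespace GraphProduct

open Monoid

variable {V : Type*} {Γ : SimpleGraph V} {G : V → Type*} [∀ v, Group (G v)]

theorem commute_of_adj {u w : V} (h : Γ.Adj u w) (a : G u) (b : G w) :
    Commute (of (Γ := Γ) a) (of b) := by
  rw [← commutatorElement_eq_one_iff_commute]
  change ⁅QuotientGroup.mk' _ (CoprodI.of a), QuotientGroup.mk' _ (CoprodI.of b)⁆ = 1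
  rw [← map_commutatorElement, QuotientGroup.mk'_apply, QuotientGroup.eq_one_iff]
  exact Subgroup.subset_normalClosure ⟨u, w, a, b, h, rfl⟩

theorem hom_ext {M : Type*} [Monoid M] {f g : GraphProduct Γ G →* M}
    (h : ∀ (u : V) (x : G u), f (of x) = g (of x)) : f = g :=
  QuotientGroup.monoidHom_ext _ (CoprodI.ext_hom _ _ fun u => MonoidHom.ext (h u))

def lift {M : Type*} [Group M] (f : ∀ u, G u →* M)
    (hf : ∀ u w, Γ.Adj u w → ∀ (a : G u) (b : G w), Commute (f u a) (f w b)) :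
    GraphProduct Γ G →* M :=
  QuotientGroup.lift _ (CoprodI.lift f) <| Subgroup.normalClosure_le_normal <| by
    rintro _ ⟨u, w, a, b, huw, rfl⟩
    simpa [map_commutatorElement, commutatorElement_eq_one_iff_commute] using hf u w huw a b

@[simp]
theorem lift_of {M : Type*} [Group M] (f : ∀ u, G u →* M) (hf) {u : V} (x : G u) :
    lift (Γ := Γ) f hf (of x) = f u x := by
  simp [lift, of]

theorem of_mem_special {A : Set V} {u : V} (hu : u ∈ A) (x : G u) :
    of x ∈ special Γ G A :=
  Subgroup.subset_closure (Set.mem_biUnion hu ⟨x, rfl⟩)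

theorem hom_ext_special {M : Type*} [Monoid M] {A : Set V} {f g : special Γ G A →* M}
    (h : ∀ (u : V) (hu : u ∈ A) (x : G u),
      f ⟨of x, of_mem_special hu x⟩ = g ⟨of x, of_mem_special hu x⟩) : f = g := by
  refine MonoidHom.eq_of_eqOn_dense Subgroup.closure_closure_coe_preimage ?_
  rintro ⟨_, _⟩ hx
  simp only [Set.mem_preimage, Set.mem_iUnion] at hx
  obtain ⟨u, hu, x, rfl⟩ := hx
  exact h u hu x

theorem commute_of_mem_special_neighborSet {v : V} {c : GraphProduct Γ G}
    (hc : c ∈ special Γ G (Γ.neighborSet v)) (x : G v) : Commute c (of x) := by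
  suffices special Γ G (Γ.neighborSet v) ≤ Subgroup.centralizer {of x} by
    simpa [Subgroup.mem_centralizer_iff, Commute, SemiconjBy, eq_comm] using this hc
  refine (Subgroup.closure_le _).2 ?_
  simp only [Set.iUnion_subset_iff, Set.range_subset_iff]
  intro u hu y
  simpa [Subgroup.mem_centralizer_iff] using (commute_of_adj hu x y).eq

section Decomposition

open SemidirectProduct

variable (Γ G) (v : V)

abbrev linkSubgroup : Subgroup (special Γ G {v}ᶜ) :=
  (special Γ G (Γ.neighborSet v)).subgroupOf (special Γ G {v}ᶜ)

abbrev LinkCosets : Type _ := special Γ G {v}ᶜ ⧸ linkSubgroup Γ G v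

abbrev CosetFreeProduct : Type _ := CoprodI fun _ : LinkCosets Γ G v => G v

noncomputable def cosetAction : special Γ G {v}ᶜ →* MulAut (CosetFreeProduct Γ G v) :=
  (CoprodI.permAction (G v)).comp (MulAction.toPermHom _ _)

variable {Γ G v}

theorem cosetAction_of (s : special Γ G {v}ᶜ) (q : LinkCosets Γ G v) (x : G v) :
    cosetAction Γ G v s (CoprodI.of (i := q) x) = CoprodI.of (i := s • q) x :=
  CoprodI.permAction_of _ _ x

variable (v) in
noncomputable def conjOf (q : LinkCosets Γ G v) : G v →* GraphProduct Γ G :=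
  (MulAut.conj (q.out : GraphProduct Γ G)).toMonoidHom.comp of

theorem conjOf_mk (g : special Γ G {v}ᶜ) (x : G v) :
    conjOf v (g : LinkCosets Γ G v) x =
      (g : GraphProduct Γ G) * of x * (g : GraphProduct Γ G)⁻¹ := by
  obtain ⟨c, hc⟩ := QuotientGroup.mk_out_eq_mul (linkSubgroup Γ G v) g
  have hcx := commute_of_mem_special_neighborSet (Subgroup.mem_subgroupOf.1 c.2) x
  simp only [conjOf, MonoidHom.comp_apply, MulEquiv.coe_toMonoidHom, MulAut.conj_apply, hc,
    Subgroup.coe_mul, mul_inv_rev, mul_assoc, hcx.eq]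
  simp

variable (Γ G v) in
noncomputable def fromSemidirect :
    CosetFreeProduct Γ G v ⋊[cosetAction Γ G v] special Γ G {v}ᶜ →* GraphProduct Γ G :=
  SemidirectProduct.lift (CoprodI.lift (conjOf v)) (special Γ G {v}ᶜ).subtype fun s =>
    CoprodI.ext_hom _ _ fun q => by
      induction q using QuotientGroup.induction_on with | H g => ?_
      ext x
      simp only [MonoidHom.comp_apply, MulEquiv.coe_toMonoidHom, cosetAction_of,
        CoprodI.lift_of, MulAction.Quotient.smul_mk, smul_eq_mul, conjOf_mk,
        MulAut.conj_apply, Subgroup.coe_subtype, Subgroup.coe_mul]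
      group

@[simp]
theorem fromSemidirect_inl_of (q : LinkCosets Γ G v) (x : G v) :
    fromSemidirect Γ G v (inl (CoprodI.of (i := q) x)) = conjOf v q x := by
  simp [fromSemidirect]

@[simp]
theorem fromSemidirect_inr (s : special Γ G {v}ᶜ) :
    fromSemidirect Γ G v (inr s) = s := by
  simp [fromSemidirect]

def ofCompl {u : V} (hu : u ≠ v) : G u →* special Γ G {v}ᶜ :=
  of.codRestrict _ (of_mem_special hu)

theorem commute_inl_of_one_inr_ofCompl {u : V} (hvu : Γ.Adj v u) (a : G v) (b : G u) :
    Commute (inl (CoprodI.of (i := ((1 : special Γ G {v}ᶜ) : LinkCosets Γ G v)) a) :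
        CosetFreeProduct Γ G v ⋊[cosetAction Γ G v] special Γ G {v}ᶜ)
      (inr (ofCompl hvu.ne' b)) := by
  have hfix : ofCompl (Γ := Γ) hvu.ne' b • ((1 : special Γ G {v}ᶜ) : LinkCosets Γ G v) =
      (1 : special Γ G {v}ᶜ) := by
    rw [MulAction.Quotient.smul_mk, smul_eq_mul, mul_one, eq_comm, QuotientGroup.eq, inv_one,
      one_mul, Subgroup.mem_subgroupOf]
    exact of_mem_special hvu b
  exact commute_inl_inr_of_fixed (by rw [cosetAction_of, hfix])

variable (Γ G v) in
open Classical in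
noncomputable def toSemidirect :
    GraphProduct Γ G →* CosetFreeProduct Γ G v ⋊[cosetAction Γ G v] special Γ G {v}ᶜ :=
  lift (fun u => if hu : u = v then
      (inl.comp (CoprodI.of (i := ((1 : special Γ G {v}ᶜ) : LinkCosets Γ G v)))).comp
        (hu ▸ MonoidHom.id (G u))
      else inr.comp (ofCompl hu)) <| by
    intro u w huw a b
    by_cases hu : u = v <;> by_cases hw : w = v
    · exact absurd (hu.trans hw.symm) huw.ne
    · subst u
      simpa [hw] using commute_inl_of_one_inr_ofCompl huw a b
    · subst w
      simpa [hu] using (commute_inl_of_one_inr_ofCompl huw.symm b a).symm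
    · have hab : Commute (ofCompl (Γ := Γ) hu a) (ofCompl hw b) :=
        Subtype.ext (commute_of_adj huw a b)
      simpa [hu, hw] using hab.map inr

@[simp]
theorem toSemidirect_of_self (x : G v) :
    toSemidirect Γ G v (of x) =
      inl (CoprodI.of (i := ((1 : special Γ G {v}ᶜ) : LinkCosets Γ G v)) x) := by
  simp [toSemidirect]

@[simp]
theorem toSemidirect_of_ne {u : V} (hu : u ≠ v) (x : G u) :
    toSemidirect Γ G v (of x) = inr (ofCompl hu x) := by
  simp [toSemidirect, hu]

theorem toSemidirect_coe (s : special Γ G {v}ᶜ) : toSemidirect Γ G v s = inr s := by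
  change ((toSemidirect Γ G v).comp (special Γ G {v}ᶜ).subtype) s = inr s
  congr 1
  exact hom_ext_special fun u hu x => toSemidirect_of_ne hu x

theorem toSemidirect_conjOf (q : LinkCosets Γ G v) (x : G v) :
    toSemidirect Γ G v (conjOf v q x) = inl (CoprodI.of (i := q) x) := by
  induction q using QuotientGroup.induction_on with | H g => ?_
  rw [conjOf_mk, map_mul, map_mul, map_inv, toSemidirect_coe, toSemidirect_of_self, ← map_inv,
    ← inl_aut, cosetAction_of, MulAction.Quotient.smul_mk, smul_eq_mul, mul_one]

theorem fromSemidirect_comp_toSemidirect :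
    (fromSemidirect Γ G v).comp (toSemidirect Γ G v) = MonoidHom.id _ := by
  refine hom_ext fun u x => ?_
  by_cases hu : u = v
  · subst u
    simp [conjOf_mk]
  · simp [toSemidirect_of_ne hu, ofCompl]

theorem toSemidirect_comp_fromSemidirect :
    (toSemidirect Γ G v).comp (fromSemidirect Γ G v) = MonoidHom.id _ :=
  SemidirectProduct.hom_ext
    (CoprodI.ext_hom _ _ fun q => MonoidHom.ext fun x => by simp [toSemidirect_conjOf])
    (MonoidHom.ext fun s => by simp [toSemidirect_coe])

variable (Γ G v) in
noncomputable def semidirectEquiv :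
    GraphProduct Γ G ≃* CosetFreeProduct Γ G v ⋊[cosetAction Γ G v] special Γ G {v}ᶜ :=
  MonoidHom.toMulEquiv _ _ fromSemidirect_comp_toSemidirect toSemidirect_comp_fromSemidirect

variable (Γ G v) in
theorem of_injective : Function.Injective (of (Γ := Γ) (G := G) (v := v)) := by
  refine Function.Injective.of_comp (f := toSemidirect Γ G v) ?_
  simpa [Function.comp_def] using inl_injective.comp
    (CoprodI.of_injective (M := fun _ : LinkCosets Γ G v => G v) (1 : special Γ G {v}ᶜ))

end Decomposition

end GraphProduct

open GraphProduct Monoid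

/-- For a vertex `v` and `A = VΓ∖{v}`, the canonical retraction
`ρ_A : G → G_A` gives a split short exact sequence `1 → K → G → G_A → 1`, whose
kernel `K` is isomorphic to the free product of the conjugates `g G_v g⁻¹` as `g`
ranges over a transversal `T` of `G_{link v}` in `G_A`; in particular
`G ≅ K ⋊ G_A`. -/
theorem graphProduct_split_exact_sequence {V : Type*} (Γ : SimpleGraph V)
    (G : V → Type*) [∀ v, Group (G v)] (v : V)
    (ρ : GraphProduct Γ G →* GraphProduct.special Γ G {v}ᶜ)
    (hρA : ∀ u : V, u ≠ v → ∀ g : G u,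
      (ρ (GraphProduct.of g) : GraphProduct Γ G) = GraphProduct.of g)
    (hρv : ∀ g : G v, ρ (GraphProduct.of g) = 1)
    (T : Set (GraphProduct Γ G))
    (hTA : T ⊆ GraphProduct.special Γ G {v}ᶜ)
    (hT : ∀ g ∈ GraphProduct.special Γ G {v}ᶜ,
      ∃! t, t ∈ T ∧ t⁻¹ * g ∈ GraphProduct.special Γ G (Γ.neighborSet v)) :
    Function.Surjective ρ ∧
    (∀ x : GraphProduct.special Γ G {v}ᶜ, ρ ↑x = x) ∧
    Nonempty (ρ.ker ≃* Monoid.CoprodI (fun t : T =>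
      Subgroup.map (MulAut.conj (t : GraphProduct Γ G)).toMonoidHom
        (MonoidHom.range (GraphProduct.of (Γ := Γ) (G := G) (v := v))))) ∧
    ∃ φ : GraphProduct.special Γ G {v}ᶜ →* MulAut ρ.ker,
      Nonempty (GraphProduct Γ G ≃* ρ.ker ⋊[φ] GraphProduct.special Γ G {v}ᶜ) := by
  have hfix : ∀ x : special Γ G {v}ᶜ, ρ x = x := DFunLike.congr_fun <|
    hom_ext_special (f := ρ.comp (special Γ G {v}ᶜ).subtype) (g := MonoidHom.id _)
      fun u hu x => Subtype.ext (hρA u hu x)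
  have hsurj : Function.Surjective ρ := fun x => ⟨x, hfix x⟩
  have hρ : SemidirectProduct.rightHom.comp (semidirectEquiv Γ G v).toMonoidHom = ρ := by
    refine hom_ext fun u x => ?_
    by_cases hu : u = v
    · subst u
      simp [semidirectEquiv, hρv]
    · simpa [semidirectEquiv, toSemidirect_of_ne hu] using Subtype.ext (hρA u hu x).symm
  let eT : T ≃ LinkCosets Γ G v :=
    Equiv.ofBijective _ (Subgroup.bijective_mk_of_existsUnique_inv_mul_mem hTA hT)
  let splitting : (ρ.kerExtension hsurj).Splitting := ⟨(special Γ G {v}ᶜ).subtype, hfix⟩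
  refine ⟨hsurj, hfix, ⟨?_⟩, _, ⟨splitting.semidirectProductMulEquiv.symm⟩⟩
  exact (SemidirectProduct.kerEquivOfRightHomComp _ ρ hρ).trans <|
    (CoprodI.reindexConst (G v) eT.symm).trans <| CoprodI.congr fun t =>
      (MonoidHom.ofInjective (of_injective Γ G v)).trans
        (Subgroup.equivMapOfInjective _ _ (MulAut.conj (t : GraphProduct Γ G)).injective)
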